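/- arXiv:1504.04449 — 2 statements merged into one kernel-verified Lean document; each statement's English description precedes it below -/
import Mathlib

section
/- For a pure tripartite state |ψ_{ABC}⟩, one has tr[ρ_{AB}(log ρ_{AB})(I_A⊗log ρ_B)] = tr[ρ_{AC}(log ρ_{AC})(I_A⊗log ρ_C)]. -/
open Matrix Kronecker ComplexOrder

/-- Apply a real function to a Hermitian matrix via its spectral decomposition
(returns 0 on non-Hermitian input). -/
noncomputable def hermFun {n : Type*} [Fintype n] [DecidableEq n]
    (f : ℝ → ℝ) (A : Matrix n n ℂ) : Matrix n n ℂ :=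
  if hA : A.IsHermitian then
    (hA.eigenvectorUnitary : Matrix n n ℂ) *
      Matrix.diagonal (fun i => (f (hA.eigenvalues i) : ℂ)) *
      (hA.eigenvectorUnitary : Matrix n n ℂ)ᴴ
  else 0

/-- Matrix logarithm, taken on the support (`log 0 := 0` on the kernel). -/
noncomputable def mLog {n : Type*} [Fintype n] [DecidableEq n]
    (A : Matrix n n ℂ) : Matrix n n ℂ :=
  hermFun (fun x => if x ≤ 0 then 0 else Real.log x) A

/-- Quantum relative entropy `D(ρ‖σ) = tr[ρ(log ρ − log σ)]`. -/
noncomputable def relEnt {n : Type*} [Fintype n] [DecidableEq n]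
    (ρ σ : Matrix n n ℂ) : ℝ :=
  ((ρ * (mLog ρ - mLog σ)).trace).re

/-- Marginal on AB of a pure tripartite state. -/
noncomputable def rhoAB {a b c : ℕ} (ψ : Fin a × Fin b × Fin c → ℂ) :
    Matrix (Fin a × Fin b) (Fin a × Fin b) ℂ :=
  fun p q => ∑ k : Fin c, ψ (p.1, p.2, k) * star (ψ (q.1, q.2, k))

/-- Marginal on AC of a pure tripartite state. -/
noncomputable def rhoAC {a b c : ℕ} (ψ : Fin a × Fin b × Fin c → ℂ) :
    Matrix (Fin a × Fin c) (Fin a × Fin c) ℂ :=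
  fun p q => ∑ j : Fin b, ψ (p.1, j, p.2) * star (ψ (q.1, j, q.2))

/-- Marginal on B of a pure tripartite state. -/
noncomputable def rhoB {a b c : ℕ} (ψ : Fin a × Fin b × Fin c → ℂ) :
    Matrix (Fin b) (Fin b) ℂ :=
  fun p q => ∑ i : Fin a, ∑ k : Fin c, ψ (i, p, k) * star (ψ (i, q, k))

/-- Marginal on C of a pure tripartite state. -/
noncomputable def rhoC {a b c : ℕ} (ψ : Fin a × Fin b × Fin c → ℂ) :
    Matrix (Fin c) (Fin c) ℂ :=
  fun p q => ∑ i : Fin a, ∑ j : Fin b, ψ (i, j, p) * star (ψ (i, j, q))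

/-!
Write `ψ` as the matrix `M : C → AB` of its coefficients, so that `ρ_AB = M Mᴴ` and
`ρ_Cᵀ = Mᴴ M`. A function of `M Mᴴ` intertwines with the same function of `Mᴴ M`,
`f (M Mᴴ) M = M f (Mᴴ M)`, hence `ρ_AB log ρ_AB = M (log ρ_C)ᵀ Mᴴ`, and the left-hand side
becomes `⟨ψ| I_A ⊗ log ρ_B ⊗ log ρ_C |ψ⟩`. This expression is symmetric under exchanging the
roles of `B` and `C`.
-/

theorem Matrix.diagonal_mul_eq_mul_diagonal_of_injective {n m α R : Type*} [DecidableEq n]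
    [DecidableEq m] [Fintype n] [Fintype m] [CommSemiring R] [IsDomain R]
    {φ : α → R} (hφ : Function.Injective φ) (g : α → R) {d : n → α} {e : m → α}
    {X : Matrix n m R}
    (h : diagonal (fun i => φ (d i)) * X = X * diagonal (fun j => φ (e j))) :
    diagonal (fun i => g (d i)) * X = X * diagonal (fun j => g (e j)) := by
  ext i j
  have hij := congrFun (congrFun h i) j
  simp only [diagonal_mul, mul_diagonal] at hij ⊢
  by_cases hX : X i j = 0
  · simp [hX]
  · rw [hφ (mul_right_cancel₀ hX (hij.trans (mul_comm _ _)))]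
    exact mul_comm _ _

theorem Matrix.trace_mul_one_kronecker {α β R : Type*} [Fintype α] [DecidableEq α] [Fintype β]
    [NonAssocSemiring R] (X : Matrix (α × β) (α × β) R) (K : Matrix β β R) :
    (X * ((1 : Matrix α α R) ⊗ₖ K)).trace = ∑ i, ∑ j, ∑ j', X (i, j) (i, j') * K j' j := by
  simp only [trace, diag, mul_apply, Fintype.sum_prod_type, kroneckerMap_apply, one_apply,
    ite_mul, one_mul, zero_mul, mul_ite, mul_zero, Finset.sum_ite_irrel, Finset.sum_const_zero,
    Finset.sum_ite_eq', Finset.mem_univ, if_true]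

section HermFun

variable {n m : Type*} [Fintype n] [DecidableEq n] [Fintype m] [DecidableEq m]

theorem Matrix.IsHermitian.conjTranspose_eigenvectorUnitary_mul {A : Matrix n n ℂ}
    (hA : A.IsHermitian) :
    (hA.eigenvectorUnitary : Matrix n n ℂ)ᴴ * A =
      diagonal (fun i => (hA.eigenvalues i : ℂ)) * (hA.eigenvectorUnitary : Matrix n n ℂ)ᴴ := by
  have h := hA.spectral_theorem
  rw [Unitary.conjStarAlgAut_apply] at h
  calc _ = (hA.eigenvectorUnitary : Matrix n n ℂ)ᴴ * (hA.eigenvectorUnitary *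
        diagonal (fun i => (hA.eigenvalues i : ℂ)) * (hA.eigenvectorUnitary : Matrix n n ℂ)ᴴ) :=
        congrArg _ h
    _ = _ := by
      simp only [← Matrix.mul_assoc, ← star_eq_conjTranspose, Unitary.coe_star_mul_self,
        Matrix.one_mul]

theorem Matrix.IsHermitian.mul_eigenvectorUnitary {A : Matrix n n ℂ} (hA : A.IsHermitian) :
    A * (hA.eigenvectorUnitary : Matrix n n ℂ) =
      (hA.eigenvectorUnitary : Matrix n n ℂ) * diagonal (fun i => (hA.eigenvalues i : ℂ)) := by
  set U : Matrix n n ℂ := (hA.eigenvectorUnitary : Matrix n n ℂ)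
  have hUU : Uᴴ * U = 1 := Unitary.coe_star_mul_self hA.eigenvectorUnitary
  have hUU' : U * Uᴴ = 1 := Unitary.coe_mul_star_self hA.eigenvectorUnitary
  calc A * U = U * (Uᴴ * A) * U := by rw [← Matrix.mul_assoc, hUU', Matrix.one_mul]
    _ = U * diagonal (fun i => (hA.eigenvalues i : ℂ)) := by
      rw [hA.conjTranspose_eigenvectorUnitary_mul, Matrix.mul_assoc, Matrix.mul_assoc, hUU,
        Matrix.mul_one]

/-- Holds for every eigenbasis `W`, not only the one chosen in the definition of `hermFun`. -/
theorem hermFun_mul_eq_mul_diagonal (f : ℝ → ℝ) {A : Matrix n n ℂ} (hA : A.IsHermitian)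
    {W : Matrix n m ℂ} {e : m → ℝ} (h : A * W = W * diagonal (fun j => (e j : ℂ))) :
    hermFun f A * W = W * diagonal (fun j => (f (e j) : ℂ)) := by
  set U : Matrix n n ℂ := (hA.eigenvectorUnitary : Matrix n n ℂ)
  have hU : U * Uᴴ = 1 := Unitary.coe_mul_star_self hA.eigenvectorUnitary
  have hUW : diagonal (fun i => (hA.eigenvalues i : ℂ)) * (Uᴴ * W) =
      (Uᴴ * W) * diagonal (fun j => (e j : ℂ)) := by
    calc _ = Uᴴ * A * W := by rw [hA.conjTranspose_eigenvectorUnitary_mul, Matrix.mul_assoc]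
      _ = _ := by rw [Matrix.mul_assoc, h, Matrix.mul_assoc]
  have hfUW := diagonal_mul_eq_mul_diagonal_of_injective Complex.ofReal_injective
    (fun x => (f x : ℂ)) hUW
  calc hermFun f A * W = U * (diagonal (fun i => (f (hA.eigenvalues i) : ℂ)) * (Uᴴ * W)) := by
        rw [hermFun, dif_pos hA]; simp only [Matrix.mul_assoc]; rfl
    _ = W * diagonal (fun j => (f (e j) : ℂ)) := by
        rw [hfUW, ← Matrix.mul_assoc, ← Matrix.mul_assoc, hU, Matrix.one_mul]

theorem hermFun_mul_conjTranspose_self_mul (f : ℝ → ℝ) (M : Matrix n m ℂ) :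
    hermFun f (M * Mᴴ) * M = M * hermFun f (Mᴴ * M) := by
  have hA := isHermitian_conjTranspose_mul_self M
  set U : Matrix m m ℂ := (hA.eigenvectorUnitary : Matrix m m ℂ)
  have hUU' : U * Uᴴ = 1 := Unitary.coe_mul_star_self hA.eigenvectorUnitary
  have hMU : M * Mᴴ * (M * U) = M * U * diagonal (fun i => (hA.eigenvalues i : ℂ)) := by
    rw [Matrix.mul_assoc, ← Matrix.mul_assoc Mᴴ, hA.mul_eigenvectorUnitary, Matrix.mul_assoc]
  calc hermFun f (M * Mᴴ) * M = hermFun f (M * Mᴴ) * (M * U) * Uᴴ := by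
        rw [Matrix.mul_assoc, Matrix.mul_assoc, hUU', Matrix.mul_one]
    _ = M * hermFun f (Mᴴ * M) := by
        rw [hermFun_mul_eq_mul_diagonal f (isHermitian_mul_conjTranspose_self M) hMU, hermFun,
          dif_pos hA]
        simp only [Matrix.mul_assoc]; rfl

theorem mul_conjTranspose_self_mul_hermFun (f : ℝ → ℝ) (M : Matrix n m ℂ) :
    M * Mᴴ * hermFun f (M * Mᴴ) = M * hermFun f (Mᴴ * M) * Mᴴ := by
  have h := hermFun_mul_conjTranspose_self_mul f Mᴴ
  rw [conjTranspose_conjTranspose] at h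
  rw [Matrix.mul_assoc, ← h, Matrix.mul_assoc]

theorem hermFun_transpose (f : ℝ → ℝ) {A : Matrix n n ℂ} (hA : A.IsHermitian) :
    hermFun f Aᵀ = (hermFun f A)ᵀ := by
  set U : Matrix n n ℂ := (hA.eigenvectorUnitary : Matrix n n ℂ)
  have hUU' : U * Uᴴ = 1 := Unitary.coe_mul_star_self hA.eigenvectorUnitary
  have hAU : Aᵀ * Uᴴᵀ = Uᴴᵀ * diagonal (fun i => (hA.eigenvalues i : ℂ)) := by
    rw [← transpose_mul, hA.conjTranspose_eigenvectorUnitary_mul, transpose_mul,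
      diagonal_transpose]
  calc hermFun f Aᵀ = hermFun f Aᵀ * Uᴴᵀ * Uᵀ := by
        rw [Matrix.mul_assoc, ← transpose_mul, hUU', transpose_one, Matrix.mul_one]
    _ = (hermFun f A)ᵀ := by
        rw [hermFun_mul_eq_mul_diagonal f hA.transpose hAU, hermFun, dif_pos hA]
        simp only [transpose_mul, diagonal_transpose, Matrix.mul_assoc]; rfl

end HermFun

def coeffMatrix {α β γ : Type*} (ψ : α × β × γ → ℂ) : Matrix (α × β) γ ℂ :=
  of fun p k => ψ (p.1, p.2, k)

section Tripartite

variable {α β γ : Type*} [Fintype α] [DecidableEq α] [Fintype β] [Fintype γ]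

theorem trace_coeffMatrix_mul_transpose_mul_kronecker (ψ : α × β × γ → ℂ) (K : Matrix β β ℂ)
    (L : Matrix γ γ ℂ) :
    (coeffMatrix ψ * Lᵀ * (coeffMatrix ψ)ᴴ * ((1 : Matrix α α ℂ) ⊗ₖ K)).trace =
      star ψ ⬝ᵥ ((1 : Matrix α α ℂ) ⊗ₖ (K ⊗ₖ L)) *ᵥ ψ := by
  rw [trace_mul_one_kronecker]
  simp only [mul_apply, dotProduct, mulVec, kroneckerMap_apply, one_apply, coeffMatrix,
    conjTranspose_apply, transpose_apply, of_apply, Fintype.sum_prod_type, Pi.star_apply,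
    ite_mul, one_mul, zero_mul, Finset.sum_mul, Finset.mul_sum, Finset.sum_ite_irrel,
    Finset.sum_const_zero, Finset.sum_ite_eq, Finset.mem_univ, if_true]
  refine Finset.sum_congr rfl fun i _ => ?_
  rw [Finset.sum_comm]
  refine Finset.sum_congr rfl fun j' _ => ?_
  rw [Finset.sum_comm]
  refine Finset.sum_congr rfl fun k' _ => Finset.sum_congr rfl fun j _ =>
    Finset.sum_congr rfl fun k _ => ?_
  ring

theorem dotProduct_one_kronecker_kronecker_swap (ψ : α × β × γ → ℂ) (K : Matrix β β ℂ)
    (L : Matrix γ γ ℂ) :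
    star (fun x : α × γ × β => ψ (x.1, x.2.2, x.2.1)) ⬝ᵥ
        ((1 : Matrix α α ℂ) ⊗ₖ (L ⊗ₖ K)) *ᵥ (fun x : α × γ × β => ψ (x.1, x.2.2, x.2.1)) =
      star ψ ⬝ᵥ ((1 : Matrix α α ℂ) ⊗ₖ (K ⊗ₖ L)) *ᵥ ψ := by
  let e : α × γ × β ≃ α × β × γ := (Equiv.refl α).prodCongr (Equiv.prodComm γ β)
  have hK : (1 : Matrix α α ℂ) ⊗ₖ (L ⊗ₖ K) = ((1 : Matrix α α ℂ) ⊗ₖ (K ⊗ₖ L)).submatrix e e := by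
    ext ⟨i, k, j⟩ ⟨i', k', j'⟩
    simp [e, mul_comm]
  have hψ : (fun x : α × γ × β => ψ (x.1, x.2.2, x.2.1)) = ψ ∘ e := rfl
  rw [hK, hψ, submatrix_mulVec_equiv, Function.comp_assoc, e.self_comp_symm, Function.comp_id]
  exact comp_equiv_dotProduct_comp_equiv (star ψ) _ e

end Tripartite

section PureState

variable {a b c : ℕ} (ψ : Fin a × Fin b × Fin c → ℂ)

theorem rhoAB_eq_coeffMatrix_mul_conjTranspose : rhoAB ψ = coeffMatrix ψ * (coeffMatrix ψ)ᴴ := by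
  ext p q
  simp [rhoAB, coeffMatrix, mul_apply]

theorem rhoC_eq_transpose_conjTranspose_coeffMatrix_mul :
    rhoC ψ = ((coeffMatrix ψ)ᴴ * coeffMatrix ψ)ᵀ := by
  ext k k'
  simp only [rhoC, coeffMatrix, transpose_apply, mul_apply, conjTranspose_apply, of_apply,
    Fintype.sum_prod_type, mul_comm]

theorem isHermitian_rhoC : (rhoC ψ).IsHermitian := by
  rw [rhoC_eq_transpose_conjTranspose_coeffMatrix_mul]
  exact (isHermitian_conjTranspose_mul_self _).transpose

theorem rhoAB_swap : rhoAB (fun x : Fin a × Fin c × Fin b => ψ (x.1, x.2.2, x.2.1)) = rhoAC ψ :=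
  rfl

theorem rhoB_swap : rhoB (fun x : Fin a × Fin c × Fin b => ψ (x.1, x.2.2, x.2.1)) = rhoC ψ :=
  rfl

theorem rhoC_swap : rhoC (fun x : Fin a × Fin c × Fin b => ψ (x.1, x.2.2, x.2.1)) = rhoB ψ :=
  rfl

theorem trace_rhoAB_mul_mLog_mul_one_kronecker_mLog_rhoB :
    (rhoAB ψ * mLog (rhoAB ψ) * ((1 : Matrix (Fin a) (Fin a) ℂ) ⊗ₖ mLog (rhoB ψ))).trace =
      star ψ ⬝ᵥ ((1 : Matrix (Fin a) (Fin a) ℂ) ⊗ₖ (mLog (rhoB ψ) ⊗ₖ mLog (rhoC ψ))) *ᵥ ψ := by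
  rw [rhoAB_eq_coeffMatrix_mul_conjTranspose, mLog, mul_conjTranspose_self_mul_hermFun,
    ← transpose_transpose ((coeffMatrix ψ)ᴴ * coeffMatrix ψ),
    ← rhoC_eq_transpose_conjTranspose_coeffMatrix_mul, hermFun_transpose _ (isHermitian_rhoC ψ)]
  exact trace_coeffMatrix_mul_transpose_mul_kronecker ψ _ _

end PureState

theorem stmt3_general (a b c : ℕ) (ψ : Fin a × Fin b × Fin c → ℂ) :
    (rhoAB ψ * mLog (rhoAB ψ) *
        ((1 : Matrix (Fin a) (Fin a) ℂ) ⊗ₖ mLog (rhoB ψ))).trace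
      = (rhoAC ψ * mLog (rhoAC ψ) *
        ((1 : Matrix (Fin a) (Fin a) ℂ) ⊗ₖ mLog (rhoC ψ))).trace := by
  let ψ' : Fin a × Fin c × Fin b → ℂ := fun x => ψ (x.1, x.2.2, x.2.1)
  calc _ = star ψ ⬝ᵥ ((1 : Matrix (Fin a) (Fin a) ℂ) ⊗ₖ (mLog (rhoB ψ) ⊗ₖ mLog (rhoC ψ))) *ᵥ ψ :=
        trace_rhoAB_mul_mLog_mul_one_kronecker_mLog_rhoB ψ
    _ = star ψ' ⬝ᵥ ((1 : Matrix (Fin a) (Fin a) ℂ) ⊗ₖ (mLog (rhoB ψ') ⊗ₖ mLog (rhoC ψ'))) *ᵥ ψ' := by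
        rw [rhoB_swap, rhoC_swap, dotProduct_one_kronecker_kronecker_swap]
    _ = _ := by
        rw [← trace_rhoAB_mul_mLog_mul_one_kronecker_mLog_rhoB, rhoAB_swap, rhoB_swap]

/-- For a pure tripartite state,
`tr[ρ_AB (log ρ_AB)(I_A ⊗ log ρ_B)] = tr[ρ_AC (log ρ_AC)(I_A ⊗ log ρ_C)]`. -/
theorem stmt3 (a b c : ℕ) (ψ : Fin a × Fin b × Fin c → ℂ)
    (hψ : ∑ x, Complex.normSq (ψ x) = 1) :
    (rhoAB ψ * mLog (rhoAB ψ) *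
        ((1 : Matrix (Fin a) (Fin a) ℂ) ⊗ₖ mLog (rhoB ψ))).trace
      = (rhoAC ψ * mLog (rhoAC ψ) *
        ((1 : Matrix (Fin a) (Fin a) ℂ) ⊗ₖ mLog (rhoC ψ))).trace :=
  stmt3_general a b c ψ
end

section
/- (Collision vs. information spectrum relative entropy) For every 0 < ε, λ < 1, density matrix ρ, and positive semidefinite σ with supp ρ ⊆ supp(λρ + (1−λ)σ): exp D₂(ρ ‖ λρ + (1−λ)σ) ≥ (1−ε)·[λ + (1−λ)·exp(−D_s^ε(ρ‖σ))]^{−1}, where D₂(ρ‖τ) = log tr(τ^{−1/2}ρτ^{−1/2}ρ) and D_s^ε(ρ‖σ) = sup{γ ∈ ℝ : tr(ρ {ρ ≤ 2^γ σ}) ≤ ε}. -/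
open Matrix Kronecker ComplexOrder

/-- Inverse square root of a positive semidefinite matrix, taken on its support. -/
noncomputable def pinvSqrt {n : Type*} [Fintype n] [DecidableEq n]
    (A : Matrix n n ℂ) : Matrix n n ℂ :=
  hermFun (fun x => if x ≤ 0 then 0 else (Real.sqrt x)⁻¹) A

/-- For Hermitian `M`, the orthogonal projection `{0 ≤ M}` onto the span of eigenvectors
of `M` with nonnegative eigenvalues. -/
noncomputable def posProj {n : Type*} [Fintype n] [DecidableEq n]
    (M : Matrix n n ℂ) : Matrix n n ℂ :=
  hermFun (fun x => if 0 ≤ x then 1 else 0) M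

/-- Information spectrum relative entropy
`D_s^ε(ρ‖σ) = sup{γ : tr(ρ {ρ ≤ 2^γ σ}) ≤ ε}`. -/
noncomputable def Ds {n : Type*} [Fintype n] [DecidableEq n]
    (ε : ℝ) (ρ σ : Matrix n n ℂ) : ℝ :=
  sSup {γ : ℝ | ((ρ * posProj (((2 : ℝ) ^ γ) • σ - ρ)).trace).re ≤ ε}

/-!
Fix `γ` in the set defining `D_s^ε(ρ‖σ)`, let `P = 1 - {ρ ≤ 2^γ σ}` be the projection onto the
negative part of `2^γ σ - ρ`, and `τ = λρ + (1-λ)σ`. Then `tr ρP ≥ 1 - ε` and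
`2^γ tr σP ≤ tr ρP`, so `tr τP ≤ (λ + (1-λ) 2^{-γ}) tr ρP`. Cauchy–Schwarz for the Hermitian
matrices `τ^{-1/4} ρ τ^{-1/4}` and `τ^{1/4} P τ^{1/4}`, together with `0 ≤ P ≤ 1`, gives
`(tr ρP)² ≤ tr(τ^{-1/2} ρ τ^{-1/2} ρ) · tr τP`. Hence
`1 - ε ≤ tr(τ^{-1/2} ρ τ^{-1/2} ρ) · (λ + (1-λ) 2^{-γ})`, and letting `γ` increase to `D_s^ε`
gives the bound.
-/

open scoped MatrixOrder

theorem Matrix.mul_eq_zero_of_ker_le {R l m n k : Type*} [CommRing R] [Fintype m] [Fintype n]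
    [DecidableEq k] [Fintype k] {τ : Matrix m n R} {ρ : Matrix l n R} {B : Matrix n k R}
    (hker : ∀ x, τ *ᵥ x = 0 → ρ *ᵥ x = 0) (hB : τ * B = 0) : ρ * B = 0 := by
  refine ext_of_mulVec_single fun j => ?_
  rw [← mulVec_mulVec, hker _ (by rw [mulVec_mulVec, hB, zero_mulVec]), zero_mulVec]

theorem Matrix.trace_conj_mul_conj {R n : Type*} [CommSemiring R] [Fintype n]
    {r h A B : Matrix n n R} (hr : r * r = h) :
    ((r * A * r) * (r * B * r)).trace = (h * A * h * B).trace := by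
  calc _ = ((r * A * h * B) * r).trace := by rw [← hr]; simp only [Matrix.mul_assoc]
    _ = (r * (r * A * h * B)).trace := trace_mul_comm _ _
    _ = (h * A * h * B).trace := by rw [← hr]; simp only [Matrix.mul_assoc]

section Trace

variable {n : Type*} [Fintype n] {A B : Matrix n n ℂ}

theorem Matrix.PosSemidef.re_trace_nonneg (hA : A.PosSemidef) : 0 ≤ A.trace.re :=
  (Complex.le_def.mp hA.trace_nonneg).1

theorem Matrix.IsHermitian.re_trace_mul_self_nonneg (hA : A.IsHermitian) :
    0 ≤ (A * A).trace.re := by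
  simpa only [hA.eq] using (posSemidef_conjTranspose_mul_self A).re_trace_nonneg

variable [DecidableEq n]

theorem Matrix.PosSemidef.re_trace_mul_nonneg (hA : A.PosSemidef) (hB : B.PosSemidef) :
    0 ≤ (A * B).trace.re := by
  obtain ⟨C, rfl⟩ := CStarAlgebra.nonneg_iff_eq_star_mul_self.mp hB.nonneg
  rw [← Matrix.mul_assoc, trace_mul_cycle]
  exact (hA.mul_mul_conjTranspose_same C).re_trace_nonneg

theorem Matrix.IsHermitian.re_trace_mul_sq_le (hA : A.IsHermitian) (hB : B.IsHermitian) :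
    (A * B).trace.re ^ 2 ≤ (A * A).trace.re * (B * B).trace.re := by
  let _ := (1 : Matrix n n ℂ).toMatrixSeminormedAddCommGroup PosSemidef.one
  let _ := (1 : Matrix n n ℂ).toMatrixInnerProductSpace PosSemidef.one
  have hinner : ∀ X Y : Matrix n n ℂ, Y.IsHermitian → inner ℂ Y X = (X * Y).trace := by
    intro X Y hY
    change (X * 1 * Yᴴ).trace = _
    rw [mul_one, hY.eq]
  have hcs := inner_mul_inner_self_le (𝕜 := ℂ) A B
  rw [hinner _ _ hA, hinner _ _ hA, hinner _ _ hB, hinner _ _ hB, trace_mul_comm B A] at hcs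
  calc (A * B).trace.re ^ 2 ≤ ‖(A * B).trace‖ * ‖(A * B).trace‖ := by
        rw [← sq, ← sq_abs]
        exact pow_le_pow_left₀ (abs_nonneg _) (Complex.abs_re_le_norm _) 2
    _ ≤ _ := hcs

end Trace

section FunctionalCalculus

variable {n : Type*} [Fintype n] [DecidableEq n] {A M : Matrix n n ℂ}

theorem hermFun_eq_cfc (hA : A.IsHermitian) (f : ℝ → ℝ) : hermFun f A = cfc f A := by
  rw [hA.cfc_eq, IsHermitian.cfc, Unitary.conjStarAlgAut_apply, hermFun, dif_pos hA]
  rfl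

theorem Matrix.cfc_mul_cfc (f g : ℝ → ℝ) (A : Matrix n n ℂ) :
    cfc f A * cfc g A = cfc (fun x => f x * g x) A :=
  (cfc_mul f g A (A.finite_real_spectrum.continuousOn _)
    (A.finite_real_spectrum.continuousOn _)).symm

theorem Matrix.mul_cfc (f : ℝ → ℝ) (hA : A.IsHermitian) :
    A * cfc f A = cfc (fun x => x * f x) A := by
  conv_lhs => enter [1]; rw [← cfc_id' ℝ A hA.isSelfAdjoint]
  exact cfc_mul_cfc _ _ _

theorem Matrix.PosSemidef.cfc_congr (hA : A.PosSemidef) {f g : ℝ → ℝ}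
    (hfg : ∀ x, 0 ≤ x → f x = g x) : cfc f A = cfc g A :=
  _root_.cfc_congr fun x hx => hfg x (spectrum_nonneg_of_nonneg hA.nonneg hx)

theorem posProj_eq_cfc (hM : M.IsHermitian) :
    posProj M = cfc (fun x => if 0 ≤ x then (1 : ℝ) else 0) M :=
  hermFun_eq_cfc hM _

theorem one_sub_posProj_eq_cfc (hM : M.IsHermitian) :
    1 - posProj M = cfc (fun x => if 0 ≤ x then (0 : ℝ) else 1) M := by
  rw [posProj_eq_cfc hM, ← cfc_one ℝ M hM.isSelfAdjoint, ← cfc_sub _ _ M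
    (M.finite_real_spectrum.continuousOn _) (M.finite_real_spectrum.continuousOn _)]
  exact cfc_congr fun x _ => by split_ifs <;> norm_num

theorem posProj_posSemidef (hM : M.IsHermitian) : (posProj M).PosSemidef := by
  rw [posProj_eq_cfc hM]
  exact (cfc_nonneg fun x _ => by split_ifs <;> norm_num).posSemidef

theorem one_sub_posProj_posSemidef (hM : M.IsHermitian) : (1 - posProj M).PosSemidef := by
  rw [one_sub_posProj_eq_cfc hM]
  exact (cfc_nonneg fun x _ => by split_ifs <;> norm_num).posSemidef

theorem re_trace_mul_posProj_nonneg (hM : M.IsHermitian) : 0 ≤ (M * posProj M).trace.re := by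
  rw [posProj_eq_cfc hM, mul_cfc _ hM]
  exact (cfc_nonneg fun x _ => by split_ifs <;> nlinarith).posSemidef.re_trace_nonneg

theorem re_trace_mul_one_sub_posProj_nonpos (hM : M.IsHermitian) :
    (M * (1 - posProj M)).trace.re ≤ 0 := by
  rw [one_sub_posProj_eq_cfc hM, mul_cfc _ hM]
  have h := (neg_nonneg.mpr (cfc_nonpos (fun x : ℝ => x * if 0 ≤ x then (0 : ℝ) else 1) M
    fun x _ => by split_ifs <;> nlinarith)).posSemidef
  simpa [trace_neg] using h.re_trace_nonneg

end FunctionalCalculus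

section Collision

variable {n : Type*} [Fintype n] [DecidableEq n] {τ ρ P : Matrix n n ℂ}

theorem pinvSqrt_eq_cfc (hτ : τ.IsHermitian) :
    pinvSqrt τ = cfc (fun x => if x ≤ 0 then 0 else (√x)⁻¹) τ :=
  hermFun_eq_cfc hτ _

theorem pinvSqrt_isHermitian (hτ : τ.IsHermitian) : (pinvSqrt τ).IsHermitian := by
  rw [pinvSqrt_eq_cfc hτ]
  exact IsSelfAdjoint.cfc

theorem re_trace_pinvSqrt_mul_nonneg (hτ : τ.IsHermitian) (hρ : ρ.PosSemidef) :
    0 ≤ (pinvSqrt τ * ρ * pinvSqrt τ * ρ).trace.re := by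
  have h := hρ.mul_mul_conjTranspose_same (pinvSqrt τ)
  rw [(pinvSqrt_isHermitian hτ).eq] at h
  exact h.re_trace_mul_nonneg hρ

theorem mul_cfc_support_eq_self (hτ : τ.PosSemidef) (hker : ∀ x, τ *ᵥ x = 0 → ρ *ᵥ x = 0) :
    ρ * cfc (fun x : ℝ => if x ≤ 0 then (0 : ℝ) else 1) τ = ρ := by
  set E := cfc (fun x : ℝ => if x ≤ 0 then (0 : ℝ) else 1) τ
  have hτE : τ * E = τ := by
    rw [mul_cfc _ hτ.1, hτ.cfc_congr (g := id) fun x hx => ?_, cfc_id ℝ τ hτ.1.isSelfAdjoint]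
    split_ifs with h
    · simp [le_antisymm h hx]
    · simp
  have h := mul_eq_zero_of_ker_le hker (by rw [mul_sub, mul_one, hτE, sub_self] :
    τ * (1 - E) = 0)
  rwa [mul_sub, mul_one, sub_eq_zero, eq_comm] at h

theorem cfc_sqrt_mul_pinvSqrt_conj (hτ : τ.PosSemidef) (hρ : ρ.IsHermitian)
    (hker : ∀ x, τ *ᵥ x = 0 → ρ *ᵥ x = 0) :
    cfc Real.sqrt τ * (pinvSqrt τ * ρ * pinvSqrt τ) * cfc Real.sqrt τ = ρ := by
  set E := cfc (fun x : ℝ => if x ≤ 0 then (0 : ℝ) else 1) τ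
  have hE₁ : cfc Real.sqrt τ * pinvSqrt τ = E := by
    rw [pinvSqrt_eq_cfc hτ.1, cfc_mul_cfc]
    refine cfc_congr fun x _ => ?_
    split_ifs with h
    · simp
    · exact mul_inv_cancel₀ (Real.sqrt_pos.mpr (not_le.mp h)).ne'
  have hE₂ : pinvSqrt τ * cfc Real.sqrt τ = E := by
    rw [pinvSqrt_eq_cfc hτ.1, cfc_mul_cfc]
    refine cfc_congr fun x _ => ?_
    split_ifs with h
    · simp
    · exact inv_mul_cancel₀ (Real.sqrt_pos.mpr (not_le.mp h)).ne'
  have hρE : ρ * E = ρ := mul_cfc_support_eq_self hτ hker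
  have hEρ : E * ρ = ρ := by
    have hE : Eᴴ = E := (IsSelfAdjoint.cfc : IsSelfAdjoint E).star_eq
    simpa only [conjTranspose_mul, hρ.eq, hE] using congrArg conjTranspose hρE
  calc _ = cfc Real.sqrt τ * pinvSqrt τ * ρ * (pinvSqrt τ * cfc Real.sqrt τ) := by
        simp only [mul_assoc]
    _ = ρ := by rw [hE₁, hE₂, hEρ, hρE]

/-- Cauchy–Schwarz for `X = τ^{1/4} (τ^{-1/2} ρ τ^{-1/2}) τ^{1/4}` and `Y = τ^{1/4} P τ^{1/4}`;
`P ≤ 1` gives `tr Y² ≤ tr (Y τ^{1/2}) = tr τP`. -/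
theorem re_trace_mul_sq_le_collision (hτ : τ.PosSemidef) (hρ : ρ.IsHermitian)
    (hker : ∀ x, τ *ᵥ x = 0 → ρ *ᵥ x = 0) (hP : P.PosSemidef) (hP1 : (1 - P).PosSemidef) :
    (ρ * P).trace.re ^ 2 ≤ (pinvSqrt τ * ρ * pinvSqrt τ * ρ).trace.re * (τ * P).trace.re := by
  have hS := pinvSqrt_isHermitian hτ.1
  have hconj := cfc_sqrt_mul_pinvSqrt_conj hτ hρ hker
  set S := pinvSqrt τ
  set h := cfc Real.sqrt τ
  set r := cfc (fun x => √(√x)) τ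
  have hrr : r * r = h := by
    rw [cfc_mul_cfc]
    exact cfc_congr fun x _ => Real.mul_self_sqrt (Real.sqrt_nonneg x)
  have hrhr : r * h * r = τ := by
    rw [cfc_mul_cfc, cfc_mul_cfc, hτ.cfc_congr (g := id) fun x hx => ?_,
      cfc_id ℝ τ hτ.1.isSelfAdjoint]
    rw [mul_right_comm, Real.mul_self_sqrt (Real.sqrt_nonneg x), id, Real.mul_self_sqrt hx]
  have hr : rᴴ = r := (IsSelfAdjoint.cfc : IsSelfAdjoint r).star_eq
  set X := r * (S * ρ * S) * r
  set Y := r * P * r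
  have hX : X.IsHermitian := by
    simp only [X, IsHermitian, conjTranspose_mul, hr, hρ.eq, hS.eq, mul_assoc]
  have hY : Y.PosSemidef := by simpa only [hr] using hP.mul_mul_conjTranspose_same r
  have hhY : (h - Y).PosSemidef := by
    simpa only [hr, mul_sub, sub_mul, mul_one, hrr] using hP1.mul_mul_conjTranspose_same r
  have hXY : (X * Y).trace = (ρ * P).trace := by rw [trace_conj_mul_conj hrr, hconj]
  have hXX : (X * X).trace = (S * ρ * S * ρ).trace := by
    rw [trace_conj_mul_conj hrr, hconj, trace_mul_comm]
  have hYh : (Y * h).trace = (τ * P).trace :=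
    calc (Y * h).trace = (r * (P * r * h)).trace := by simp only [Y, mul_assoc]
      _ = (P * r * h * r).trace := trace_mul_comm _ _
      _ = (P * τ).trace := by rw [← hrhr]; simp only [mul_assoc]
      _ = (τ * P).trace := trace_mul_comm _ _
  have hYY : (Y * Y).trace.re ≤ (τ * P).trace.re := by
    have h₀ := hY.re_trace_mul_nonneg hhY
    rw [mul_sub, trace_sub, Complex.sub_re, hYh] at h₀
    linarith
  calc (ρ * P).trace.re ^ 2 ≤ (X * X).trace.re * (Y * Y).trace.re := by
        rw [← hXY]; exact hX.re_trace_mul_sq_le hY.1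
    _ ≤ (S * ρ * S * ρ).trace.re * (τ * P).trace.re := by
        rw [hXX]; exact mul_le_mul_of_nonneg_left hYY (hXX ▸ hX.re_trace_mul_self_nonneg)

end Collision

section InformationSpectrum

variable {n : Type*} [Fintype n] [DecidableEq n] {ρ σ : Matrix n n ℂ}

omit [DecidableEq n] in
theorem re_trace_smul_sub_mul (c : ℝ) (X : Matrix n n ℂ) :
    ((c • σ - ρ) * X).trace.re = c * (σ * X).trace.re - (ρ * X).trace.re := by
  simp [sub_mul, trace_sub, smul_mul_assoc, trace_smul]

theorem re_trace_mul_posProj_le (hρ : ρ.IsHermitian) (hσ : σ.PosSemidef) {c : ℝ} (hc : 0 ≤ c) :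
    (ρ * posProj (c • σ - ρ)).trace.re ≤ c * σ.trace.re := by
  have hM : (c • σ - ρ).IsHermitian := (hσ.smul hc).1.sub hρ
  have h₁ := re_trace_mul_posProj_nonneg hM
  have h₂ := hσ.re_trace_mul_nonneg (one_sub_posProj_posSemidef hM)
  rw [re_trace_smul_sub_mul] at h₁
  rw [mul_sub, mul_one, trace_sub, Complex.sub_re] at h₂
  nlinarith

theorem mul_re_trace_mul_one_sub_posProj_le (hρ : ρ.IsHermitian) (hσ : σ.IsHermitian) (c : ℝ) :
    c * (σ * (1 - posProj (c • σ - ρ))).trace.re ≤ (ρ * (1 - posProj (c • σ - ρ))).trace.re := by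
  have h := re_trace_mul_one_sub_posProj_nonpos ((hσ.smul (.all c)).sub hρ)
  rw [re_trace_smul_sub_mul] at h
  linarith

theorem exists_re_trace_mul_posProj_le {ε : ℝ} (hε : 0 < ε) (hρ : ρ.IsHermitian)
    (hσ : σ.PosSemidef) : ∃ γ : ℝ, (ρ * posProj ((2 : ℝ) ^ γ • σ - ρ)).trace.re ≤ ε := by
  have hσ₀ := hσ.re_trace_nonneg
  have hc : 0 < ε / (σ.trace.re + 1) := by positivity
  refine ⟨Real.logb 2 (ε / (σ.trace.re + 1)),
    (re_trace_mul_posProj_le hρ hσ (by positivity)).trans ?_⟩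
  rw [Real.rpow_logb (by norm_num) (by norm_num) hc, div_mul_eq_mul_div,
    div_le_iff₀ (by linarith)]
  nlinarith

theorem re_trace_mix_mul_one_sub_posProj_le {lam : ℝ} (hlam1 : lam ≤ 1) (hρ : ρ.PosSemidef)
    (hσ : σ.PosSemidef) (γ : ℝ) :
    ((lam • ρ + (1 - lam) • σ) * (1 - posProj ((2 : ℝ) ^ γ • σ - ρ))).trace.re ≤
      (lam + (1 - lam) * 2 ^ (-γ)) * (ρ * (1 - posProj ((2 : ℝ) ^ γ • σ - ρ))).trace.re := by
  have hs := mul_re_trace_mul_one_sub_posProj_le hρ.1 hσ.1 ((2 : ℝ) ^ γ)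
  set P := 1 - posProj ((2 : ℝ) ^ γ • σ - ρ)
  have hs' : (σ * P).trace.re ≤ 2 ^ (-γ) * (ρ * P).trace.re := by
    rw [Real.rpow_neg zero_le_two, ← div_eq_inv_mul, le_div_iff₀ (by positivity)]
    linarith
  simp only [add_mul, smul_mul_assoc, trace_add, trace_smul, Complex.add_re,
    Complex.real_smul, Complex.re_ofReal_mul]
  nlinarith [mul_le_mul_of_nonneg_left hs' (sub_nonneg.mpr hlam1)]

theorem one_sub_le_collision_mul {ε lam γ : ℝ} (hlam0 : 0 ≤ lam) (hlam1 : lam ≤ 1)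
    (hρ : ρ.PosSemidef) (hρ1 : ρ.trace = 1) (hσ : σ.PosSemidef)
    (hker : ∀ x, (lam • ρ + (1 - lam) • σ) *ᵥ x = 0 → ρ *ᵥ x = 0)
    (hγ : (ρ * posProj ((2 : ℝ) ^ γ • σ - ρ)).trace.re ≤ ε) :
    1 - ε ≤ (pinvSqrt (lam • ρ + (1 - lam) • σ) * ρ * pinvSqrt (lam • ρ + (1 - lam) • σ) *
      ρ).trace.re * (lam + (1 - lam) * 2 ^ (-γ)) := by
  have hτ : (lam • ρ + (1 - lam) • σ).PosSemidef :=
    (hρ.smul hlam0).add (hσ.smul (sub_nonneg.mpr hlam1))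
  have hM : ((2 : ℝ) ^ γ • σ - ρ).IsHermitian := (hσ.smul (by positivity)).1.sub hρ.1
  have hT := re_trace_pinvSqrt_mul_nonneg hτ.1 hρ
  have hcs := re_trace_mul_sq_le_collision hτ hρ.1 hker (one_sub_posProj_posSemidef hM)
    (by simpa using posProj_posSemidef hM)
  have hmix := re_trace_mix_mul_one_sub_posProj_le hlam1 hρ hσ γ
  have ht₀ := hρ.re_trace_mul_nonneg (one_sub_posProj_posSemidef hM)
  have hd : 0 ≤ lam + (1 - lam) * (2 : ℝ) ^ (-γ) :=
    add_nonneg hlam0 (mul_nonneg (sub_nonneg.mpr hlam1) (by positivity))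
  set T := (pinvSqrt (lam • ρ + (1 - lam) • σ) * ρ * pinvSqrt (lam • ρ + (1 - lam) • σ) *
    ρ).trace.re
  set t := (ρ * (1 - posProj ((2 : ℝ) ^ γ • σ - ρ))).trace.re
  have ht : 1 - ε ≤ t := by
    simp only [t, mul_sub, mul_one, trace_sub, Complex.sub_re, hρ1, Complex.one_re]
    linarith
  have htt : t * t ≤ T * (lam + (1 - lam) * 2 ^ (-γ)) * t := by
    nlinarith [mul_le_mul_of_nonneg_left hmix hT]
  have htd : t ≤ T * (lam + (1 - lam) * 2 ^ (-γ)) := by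
    by_contra! h
    linarith [mul_lt_mul_of_pos_right h ((mul_nonneg hT hd).trans_lt h)]
  linarith

end InformationSpectrum

/-- For `S` unbounded, `sSup S = 0` by convention; this case is covered by antitonicity. -/
theorem Continuous.le_apply_sSup_of_antitone {g : ℝ → ℝ} (hg : Continuous g) (hg' : Antitone g)
    {S : Set ℝ} (hS : S.Nonempty) {c : ℝ} (h : ∀ γ ∈ S, c ≤ g γ) : c ≤ g (sSup S) := by
  by_cases hbdd : BddAbove S
  · exact (isClosed_le continuous_const hg).closure_subset_iff.mpr h (csSup_mem_closure hS hbdd)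
  · obtain ⟨γ, hγ, hγ0⟩ := not_bddAbove_iff.mp hbdd 0
    rw [csSup_of_not_bddAbove hbdd, Real.sSup_empty]
    exact (h γ hγ).trans (hg' hγ0.le)

theorem stmt17_general (n : ℕ) (ε lam : ℝ) (hε : 0 < ε)
    (hlam : 0 < lam) (hlam1 : lam < 1)
    (ρ σ : Matrix (Fin n) (Fin n) ℂ)
    (hρ : ρ.PosSemidef) (hρ1 : ρ.trace = 1) (hσ : σ.PosSemidef)
    (hsupp : ∀ x : Fin n → ℂ, (lam • ρ + (1 - lam) • σ) *ᵥ x = 0 → ρ *ᵥ x = 0) :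
    ((pinvSqrt (lam • ρ + (1 - lam) • σ) * ρ *
        pinvSqrt (lam • ρ + (1 - lam) • σ) * ρ).trace).re
      ≥ (1 - ε) * (lam + (1 - lam) * (2 : ℝ) ^ (-(Ds ε ρ σ)))⁻¹ := by
  set T := ((pinvSqrt (lam • ρ + (1 - lam) • σ) * ρ *
    pinvSqrt (lam • ρ + (1 - lam) • σ) * ρ).trace).re
  have hT : 0 ≤ T :=
    re_trace_pinvSqrt_mul_nonneg ((hρ.smul hlam.le).add (hσ.smul (by linarith))).1 hρ
  have hanti : Antitone fun γ : ℝ => T * (lam + (1 - lam) * 2 ^ (-γ)) := fun a b hab => by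
    have : (1 : ℝ) ≤ 2 := one_le_two
    dsimp only
    gcongr
  have key : 1 - ε ≤ T * (lam + (1 - lam) * 2 ^ (-Ds ε ρ σ)) :=
    (by fun_prop (disch := norm_num) : Continuous fun γ : ℝ => T * (lam + (1 - lam) * 2 ^ (-γ)))
      |>.le_apply_sSup_of_antitone hanti (exists_re_trace_mul_posProj_le hε hρ.1 hσ)
      fun γ hγ => one_sub_le_collision_mul hlam.le hlam1.le hρ hρ1 hσ hsupp hγ
  have hd : 0 < lam + (1 - lam) * (2 : ℝ) ^ (-Ds ε ρ σ) := by
    have := Real.rpow_pos_of_pos two_pos (-Ds ε ρ σ)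
    nlinarith
  rw [ge_iff_le, ← div_eq_mul_inv, div_le_iff₀ hd]
  linarith

/-- Lower bound on the (exponential of the) collision relative entropy in terms of the
information spectrum relative entropy:
`exp D₂(ρ ‖ λρ + (1−λ)σ) ≥ (1−ε)[λ + (1−λ) 2^{−D_s^ε(ρ‖σ)}]⁻¹`. -/
theorem stmt17 (n : ℕ) (ε lam : ℝ) (hε : 0 < ε) (hε1 : ε < 1)
    (hlam : 0 < lam) (hlam1 : lam < 1)
    (ρ σ : Matrix (Fin n) (Fin n) ℂ)
    (hρ : ρ.PosSemidef) (hρ1 : ρ.trace = 1) (hσ : σ.PosSemidef)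
    (hsupp : ∀ x : Fin n → ℂ, (lam • ρ + (1 - lam) • σ) *ᵥ x = 0 → ρ *ᵥ x = 0) :
    ((pinvSqrt (lam • ρ + (1 - lam) • σ) * ρ *
        pinvSqrt (lam • ρ + (1 - lam) • σ) * ρ).trace).re
      ≥ (1 - ε) * (lam + (1 - lam) * (2 : ℝ) ^ (-(Ds ε ρ σ)))⁻¹ :=
  stmt17_general n ε lam hε hlam hlam1 ρ σ hρ hρ1 hσ hsupp
end
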